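/- Let G be a group and H a subgroup such that the double centralizer of H equals Z(G)·H, and suppose Z_G(H) is generated by elements g₁,…,gₙ. Then for x, y ∈ G, the following are equivalent: (1) there exists c ∈ H with y = c⁻¹xc; (2) there exists z ∈ G with y = z⁻¹xz and gᵢ = z⁻¹gᵢz for all 1 ≤ i ≤ n. -/
import Mathlib


/-- Let `G` be a group and `H` a subgroup such that the double centralizer of `H`
equals `Z(G)·H`, and suppose `Z_G(H)` is generated by elements `g₁, …, gₙ`.
Then for `x, y ∈ G` : (there exists `c ∈ H` with `y = c⁻¹xc`) iff (there exists
`z ∈ G` with `y = z⁻¹xz` and `gᵢ = z⁻¹gᵢz` for all `i`). -/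
theorem subgroup_conjugacy_criterion {G : Type*} [Group G] (H : Subgroup G)
    (hDZ : (Subgroup.centralizer
        ((Subgroup.centralizer (H : Set G) : Subgroup G) : Set G) : Set G) =
      { x : G | ∃ a ∈ Subgroup.center G, ∃ b ∈ H, x = a * b })
    (n : ℕ) (g : Fin n → G)
    (hgen : Subgroup.centralizer (H : Set G) = Subgroup.closure (Set.range g))
    (x y : G) :
    (∃ c ∈ H, y = c⁻¹ * x * c) ↔
      (∃ z : G, y = z⁻¹ * x * z ∧ ∀ i : Fin n, g i = z⁻¹ * g i * z) := by
  constructor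
  · rintro ⟨c, hc, rfl⟩
    refine ⟨c, rfl, fun i => ?_⟩
    have hgi : g i ∈ Subgroup.centralizer (H : Set G) := by
      rw [hgen]; exact Subgroup.subset_closure ⟨i, rfl⟩
    have := (Subgroup.mem_centralizer_iff.mp hgi) c hc
    rw [show c⁻¹ * g i * c = c⁻¹ * (g i * c) by group, ← this]
    group
  · rintro ⟨z, rfl, hz⟩
    have hzc : z ∈ Subgroup.centralizer
        ((Subgroup.centralizer (H : Set G) : Subgroup G) : Set G) := by
      rw [Subgroup.mem_centralizer_iff, hgen]
      intro h hh
      induction hh using Subgroup.closure_induction with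
      | mem a ha =>
        obtain ⟨i, rfl⟩ := ha
        have := hz i
        calc g i * z = z * (z⁻¹ * g i * z) := by group
        _ = z * g i := by rw [← this]
      | one => simp
      | mul a b _ _ ha hb => rw [mul_assoc, hb, ← mul_assoc, ha, mul_assoc]
      | inv a _ ha =>
        have : z * a = a * z := ha.symm
        calc a⁻¹ * z = a⁻¹ * z * a * a⁻¹ := by group
        _ = a⁻¹ * (z * a) * a⁻¹ := by group
        _ = z * a⁻¹ := by rw [this]; group
    have : z ∈ { x : G | ∃ a ∈ Subgroup.center G, ∃ b ∈ H, x = a * b } := by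
      rw [← hDZ]; exact hzc
    obtain ⟨a, ha, b, hb, rfl⟩ := this
    refine ⟨b, hb, ?_⟩
    have hax : a * x = x * a := (Subgroup.mem_center_iff.mp ha x).symm
    have hab : a * b = b * a := (Subgroup.mem_center_iff.mp ha b).symm
    have h1 : (a * b)⁻¹ * x * (a * b) = b⁻¹ * (a⁻¹ * x * a) * b := by group
    have h2 : a⁻¹ * x * a = x := by
      rw [show a⁻¹ * x * a = a⁻¹ * (x * a) by group, ← hax]; group
    rw [h1, h2]
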